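/- Let (X,U,T,c) and (X,U,S,ĉ) be two MDPs on the same state and action spaces, both satisfying Assumption B, and let β ∈ (0,1). Then ‖J*_β(c,T) − J*_β(ĉ,S)‖_∞ ≤ (1/(1−β))‖c−ĉ‖_∞ + (β/(1−β)) d_{J*_β(c,T)}(T,S). If in addition J*_β(c,T) is Lipschitz continuous, then ‖J*_β(c,T) − J*_β(ĉ,S)‖_∞ ≤ (1/(1−β))‖c−ĉ‖_∞ + (β/(1−β)) ‖J*_β(c,T)‖_Lip · d_{W1}(T,S). -/

import Mathlib

open MeasureTheory Filter Topology
open scoped NNReal ENNReal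

noncomputable section

namespace MDPRobust

variable {X : Type*} {U : Type*} [MeasurableSpace X] [MeasurableSpace U]

/-- A history-dependent, randomized policy: at time `t`, given the history
`((x_0,u_0),…,(x_{t-1},u_{t-1})), x_t`, a distribution over actions. -/
def Policy (X U : Type*) [MeasurableSpace X] [MeasurableSpace U] : Type _ :=
  (t : ℕ) → ((Fin t → X × U) × X) → Measure U

/-- Admissibility of a policy: measurability and each action distribution is a
probability measure. -/
def IsAdmissible (γ : Policy X U) : Prop :=
  (∀ t, Measurable (γ t)) ∧ ∀ t h, IsProbabilityMeasure (γ t h)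

/-- Law of the history `((x_0,u_0),…,(x_{t-1},u_{t-1})), x_t` for the controlled Markov
process with transition kernel `T`, policy `γ` and initial state `x`. -/
def histMeas (T : X → U → Measure X) (γ : Policy X U) (x : X) :
    (t : ℕ) → Measure ((Fin t → X × U) × X)
  | 0 => Measure.dirac (fun i => i.elim0, x)
  | (t + 1) =>
      Measure.bind (histMeas T γ x t) fun z =>
        Measure.bind (γ t z) fun u =>
          Measure.map (fun x' => (Fin.snoc z.1 (z.2, u), x')) (T z.2 u)

/-- Expected cost incurred at time `t`: `E^{T,γ}[c(X_t,U_t) | X_0 = x]`. -/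
def costAt (c : X → U → ℝ) (T : X → U → Measure X) (γ : Policy X U) (x : X) (t : ℕ) : ℝ :=
  ∫ z, ∫ u, c z.2 u ∂(γ t z) ∂(histMeas T γ x t)

/-- Discounted value of a policy: `J_β(c,T,γ)(x)`. -/
def Jdisc (β : ℝ) (c : X → U → ℝ) (T : X → U → Measure X) (γ : Policy X U) (x : X) : ℝ :=
  ∑' t : ℕ, β ^ t * costAt c T γ x t

/-- Optimal discounted value `J*_β(c,T)(x)`: infimum over admissible policies. -/
def JdiscOpt (β : ℝ) (c : X → U → ℝ) (T : X → U → Measure X) (x : X) : ℝ :=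
  sInf {r | ∃ γ : Policy X U, IsAdmissible γ ∧ r = Jdisc β c T γ x}

/-- Average cost of a policy: `J_∞(c,T,γ)(x)`. -/
def Javg (c : X → U → ℝ) (T : X → U → Measure X) (γ : Policy X U) (x : X) : ℝ :=
  Filter.limsup (fun n : ℕ => (∑ t ∈ Finset.range n, costAt c T γ x t) / n) atTop

/-- Optimal average cost `J*_∞(c,T)(x)`. -/
def JavgOpt (c : X → U → ℝ) (T : X → U → Measure X) (x : X) : ℝ :=
  sInf {r | ∃ γ : Policy X U, IsAdmissible γ ∧ r = Javg c T γ x}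

/-- The (Markov, randomized-as-Dirac) policy induced by a deterministic stationary
policy `g : X → U`. -/
def statPolicy (g : X → U) : Policy X U := fun _ z => Measure.dirac (g z.2)

/-- `|∫ f dμ − ∫ f dν|`. -/
def dFun (f : X → ℝ) (μ ν : Measure X) : ℝ := |∫ y, f y ∂μ - ∫ y, f y ∂ν|

section Topo

variable [MetricSpace X] [MetricSpace U]

/-- Assumption B (standing assumptions): `c` nonnegative, bounded, jointly continuous,
`T` a weakly continuous controlled probability kernel. (Compactness of `U` is carried
as an instance hypothesis.) -/
def AssumptionB (T : X → U → Measure X) (c : X → U → ℝ) : Prop :=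
  (∀ x u, 0 ≤ c x u) ∧ (∃ B : ℝ, ∀ x u, |c x u| ≤ B) ∧
  Continuous (Function.uncurry c) ∧
  (∀ x u, IsProbabilityMeasure (T x u)) ∧
  Measurable (Function.uncurry T) ∧
  (∀ v : X → ℝ, Continuous v → (∃ B : ℝ, ∀ y, |v y| ≤ B) →
    Continuous fun p : X × U => ∫ y, v y ∂(T p.1 p.2))

/-- `x ↦ c(x,u)` is `K`-Lipschitz for every `u`. -/
def CostLipschitz (c : X → U → ℝ) (K : ℝ≥0) : Prop :=
  ∀ u, LipschitzWith K fun x => c x u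

/-- `x ↦ T(·|x,u)` is `K`-Lipschitz into `(P(X), W₁)`, expressed through the
Kantorovich–Rubinstein dual form of the Wasserstein-1 distance. -/
def KernelLipschitz (T : X → U → Measure X) (K : ℝ≥0) : Prop :=
  ∀ f : X → ℝ, LipschitzWith 1 f → ∀ u x y,
    |∫ a, f a ∂(T x u) - ∫ a, f a ∂(T y u)| ≤ K * dist x y

/-- Assumption M (Wasserstein regular MDP for discount factor `β`). -/
def AssumptionM (β : ℝ) (T : X → U → Measure X) (c : X → U → ℝ)
    (Kc KT : ℝ≥0) : Prop :=
  AssumptionB T c ∧ CostLipschitz c Kc ∧ KernelLipschitz T KT ∧ β * KT < 1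

/-- Assumption E(c): joint Lipschitz continuity of the kernel in state and action,
in the dual (Kantorovich–Rubinstein) form of the Wasserstein-1 distance. -/
def AssumptionEc (T : X → U → Measure X) (Lt : ℝ≥0) : Prop :=
  ∀ f : X → ℝ, LipschitzWith 1 f → ∀ x y u u',
    |∫ a, f a ∂(T x u) - ∫ a, f a ∂(T y u')| ≤ Lt * (dist x y + dist u u')

/-- Assumption E(b): uniform Lipschitz bound on discounted value functions near `β = 1`. -/
def AssumptionEb (T : X → U → Measure X) (c : X → U → ℝ) (L : ℝ≥0) : Prop :=
  ∃ βstar : ℝ, 0 < βstar ∧ βstar < 1 ∧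
    ∀ β : ℝ, βstar ≤ β → β < 1 → LipschitzWith L (JdiscOpt β c T)

end Topo

/-- Minorization condition: `T(A|x,u) ≥ ε ρ(A)` for all `x`, `u`, Borel `A`. -/
def Minorized (T : X → U → Measure X) (ρ : Measure X) (ε : ℝ≥0) : Prop :=
  ∀ x u, ∀ A : Set X, MeasurableSet A → (ε : ℝ≥0∞) * ρ A ≤ T x u A

end MDPRobust

namespace MDPRobust

variable {X : Type*} {U : Type*} [MeasurableSpace X] [MeasurableSpace U]

section Aux

lemma measurable_finSnoc {A : Type*} [MeasurableSpace A] {t : ℕ} :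
    Measurable (fun p : (Fin t → A) × A => (Fin.snoc p.1 p.2 : Fin (t+1) → A)) := by
  apply measurable_pi_lambda
  intro i
  by_cases h : (i : ℕ) < t
  · have : (fun p : (Fin t → A) × A => (Fin.snoc p.1 p.2 : Fin (t+1) → A) i) =
        fun p => p.1 (Fin.castLT i h) := by
      funext p; simp [Fin.snoc, h]
    rw [this]
    exact (measurable_pi_apply _).comp measurable_fst
  · have : (fun p : (Fin t → A) × A => (Fin.snoc p.1 p.2 : Fin (t+1) → A) i) =
        fun p => p.2 := by
      funext p; simp [Fin.snoc, h]
    rw [this]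
    exact measurable_snd

/-- Append `(current state, action)` to the history and move to a new state. -/
def snocFun {t : ℕ} (z : (Fin t → X × U) × X) (u : U) :
    X → ((Fin (t+1) → X × U) × X) :=
  fun x' => ((Fin.snoc z.1 (z.2, u) : Fin (t+1) → X × U), x')

lemma measurable_snocFun {t : ℕ} (z : (Fin t → X × U) × X) (u : U) :
    Measurable (snocFun z u) :=
  measurable_const.prodMk measurable_id

/-- The one-step transition of the history process. -/
def stepKer (T : X → U → Measure X) (γ : Policy X U) (t : ℕ)
    (z : (Fin t → X × U) × X) : Measure ((Fin (t+1) → X × U) × X) :=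
  Measure.bind (γ t z) fun u => Measure.map (snocFun z u) (T z.2 u)

lemma histMeas_succ (T : X → U → Measure X) (γ : Policy X U) (x : X) (t : ℕ) :
    histMeas T γ x (t+1) = Measure.bind (histMeas T γ x t) (stepKer T γ t) := rfl

variable {T : X → U → Measure X} {γ : Policy X U}

/-- The inner kernel of `stepKer`, jointly measurable in history and action. -/
lemma measurable_stepInner (hTm : Measurable (Function.uncurry T))
    (hTp : ∀ x u, IsProbabilityMeasure (T x u)) (t : ℕ) :
    Measurable (fun p : (((Fin t → X × U) × X) × U) =>
      Measure.map (snocFun p.1 p.2) (T p.1.2 p.2)) := by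
  apply Measure.measurable_of_measurable_coe
  intro s hs
  have hψ : Measurable (fun p : (((Fin t → X × U) × X) × U) =>
      (Fin.snoc p.1.1 (p.1.2, p.2) : Fin (t+1) → X × U)) :=
    measurable_finSnoc.comp ((measurable_fst.comp measurable_fst).prodMk
      ((measurable_snd.comp measurable_fst).prodMk measurable_snd))
  simp_rw [Measure.map_apply (measurable_snocFun _ _) hs]
  set κ : ProbabilityTheory.Kernel (((Fin t → X × U) × X) × U) X :=
    { toFun := fun p => T p.1.2 p.2,
      measurable' := hTm.comp ((measurable_snd.comp measurable_fst).prodMk measurable_snd) }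
    with hk
  haveI : ProbabilityTheory.IsMarkovKernel κ := ⟨fun p => hTp _ _⟩
  have hS : MeasurableSet {q : ((((Fin t → X × U) × X) × U) × X) | snocFun q.1.1 q.1.2 q.2 ∈ s} := by
    have hm : Measurable (fun q : ((((Fin t → X × U) × X) × U) × X) => snocFun q.1.1 q.1.2 q.2) := by
      unfold snocFun
      exact (hψ.comp measurable_fst).prodMk measurable_snd
    exact hm hs
  exact ProbabilityTheory.Kernel.measurable_kernel_prodMk_left (κ := κ) hS

lemma measurable_stepKer (hTm : Measurable (Function.uncurry T))
    (hTp : ∀ x u, IsProbabilityMeasure (T x u)) (hγ : IsAdmissible γ) (t : ℕ) :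
    Measurable (stepKer T γ t) := by
  apply Measure.measurable_of_measurable_coe
  intro s hs
  have hinner := measurable_stepInner (T := T) hTm hTp t
  have h1 : ∀ z, stepKer T γ t z s
      = ∫⁻ u, (Measure.map (snocFun z u) (T z.2 u)) s ∂(γ t z) := by
    intro z
    have hm : Measurable fun u => Measure.map (snocFun z u) (T z.2 u) :=
      hinner.comp (measurable_const.prodMk measurable_id)
    exact Measure.bind_apply hs hm.aemeasurable
  simp_rw [h1]
  set κγ : ProbabilityTheory.Kernel ((Fin t → X × U) × X) U :=
    { toFun := γ t, measurable' := hγ.1 t } with hκγ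
  haveI : ProbabilityTheory.IsMarkovKernel κγ := ⟨fun z => hγ.2 t z⟩
  exact Measurable.lintegral_kernel_prod_right' (κ := κγ)
    ((Measure.measurable_coe hs).comp hinner)

lemma isProbabilityMeasure_histMeas (hTm : Measurable (Function.uncurry T))
    (hTp : ∀ x u, IsProbabilityMeasure (T x u)) (hγ : IsAdmissible γ) (x : X) :
    ∀ t, IsProbabilityMeasure (histMeas T γ x t) := by
  intro t
  induction t with
  | zero => exact Measure.dirac.isProbabilityMeasure
  | succ t ih =>
    constructor
    rw [histMeas_succ, Measure.bind_apply MeasurableSet.univ (measurable_stepKer hTm hTp hγ t).aemeasurable]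
    have hstep : ∀ z : ((Fin t → X × U) × X), stepKer T γ t z Set.univ = 1 := by
      intro z
      have hm : Measurable fun u => Measure.map (snocFun z u) (T z.2 u) :=
        (measurable_stepInner (T := T) hTm hTp t).comp
          (measurable_const.prodMk measurable_id)
      rw [stepKer, Measure.bind_apply MeasurableSet.univ hm.aemeasurable]
      have h2 : ∀ u, (Measure.map (snocFun z u) (T z.2 u)) Set.univ = 1 := by
        intro u
        rw [Measure.map_apply (measurable_snocFun _ _) MeasurableSet.univ]
        simp [(hTp z.2 u).measure_univ]
      simp_rw [h2]
      simpa using (hγ.2 t z).measure_univ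
    simp_rw [hstep]
    simpa using (ih).measure_univ

/-- The one-step decomposition of integrals against the history measure. -/
lemma lintegral_histMeas_succ (hTm : Measurable (Function.uncurry T))
    (hTp : ∀ x u, IsProbabilityMeasure (T x u)) (hγ : IsAdmissible γ)
    (x : X) (t : ℕ) {g : ((Fin (t+1) → X × U) × X) → ℝ≥0∞} (hg : Measurable g) :
    ∫⁻ w, g w ∂(histMeas T γ x (t+1))
      = ∫⁻ z, ∫⁻ u, ∫⁻ x', g (snocFun z u x') ∂(T z.2 u) ∂(γ t z)
          ∂(histMeas T γ x t) := by
  rw [histMeas_succ, Measure.lintegral_bind (measurable_stepKer hTm hTp hγ t).aemeasurable hg.aemeasurable]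
  congr 1; funext z
  have hm : Measurable fun u => Measure.map (snocFun z u) (T z.2 u) :=
    (measurable_stepInner (T := T) hTm hTp t).comp
      (measurable_const.prodMk measurable_id)
  rw [stepKer, Measure.lintegral_bind hm.aemeasurable hg.aemeasurable]
  congr 1; funext u
  rw [lintegral_map hg (measurable_snocFun _ _)]

end Aux

lemma abs_ciInf_sub_ciInf {U : Type*} [Nonempty U] {f g : U → ℝ}
    (hf : BddBelow (Set.range f)) (hg : BddBelow (Set.range g)) {M : ℝ}
    (h : ∀ u, |f u - g u| ≤ M) : |(⨅ u, f u) - ⨅ u, g u| ≤ M := by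
  have h1 : (⨅ u, f u) - M ≤ ⨅ u, g u := by
    apply le_ciInf
    intro u
    have h2 := ciInf_le hf u
    have h3 := h u
    rw [abs_le] at h3
    linarith
  have h4 : (⨅ u, g u) - M ≤ ⨅ u, f u := by
    apply le_ciInf
    intro u
    have h2 := ciInf_le hg u
    have h3 := h u
    rw [abs_le] at h3
    linarith
  rw [abs_le]
  constructor <;> linarith

lemma continuous_iInf_of_compact {X U : Type*} [MetricSpace X] [MetricSpace U]
    [CompactSpace U] [Nonempty U] {F : X × U → ℝ} (hF : Continuous F) :
    Continuous fun x => ⨅ u, F (x, u) := by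
  have hbdd : ∀ x : X, BddBelow (Set.range fun u => F (x, u)) := by
    intro x
    have := (isCompact_univ (X := U)).bddBelow_image
      ((hF.comp (Continuous.prodMk_right x)).continuousOn)
    simpa [Set.image_univ] using this
  rw [continuous_iff_continuousAt]
  intro x₀
  rw [Metric.continuousAt_iff]
  intro ε hε
  -- tube lemma argument
  set G : X × U → ℝ := fun p => F p - F (x₀, p.2) with hG
  have hGc : Continuous G := hF.sub (hF.comp (continuous_const.prodMk continuous_snd))
  have hW : IsOpen (G ⁻¹' Set.Ioo (-(ε/2)) (ε/2)) := hGc.isOpen_preimage _ isOpen_Ioo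
  have hsub : {x₀} ×ˢ (Set.univ : Set U) ⊆ G ⁻¹' Set.Ioo (-(ε/2)) (ε/2) := by
    rintro ⟨a, u⟩ ⟨ha, -⟩
    simp only [Set.mem_singleton_iff] at ha
    subst ha
    simp [hG, half_pos hε]
  obtain ⟨a, b, hao, -, hx₀a, hub, hab⟩ :=
    generalized_tube_lemma isCompact_singleton isCompact_univ hW hsub
  obtain ⟨δ, hδ, hball⟩ := Metric.isOpen_iff.1 hao x₀ (hx₀a rfl)
  refine ⟨δ, hδ, ?_⟩
  intro x hx
  have key : ∀ u : U, |F (x, u) - F (x₀, u)| ≤ ε / 2 := by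
    intro u
    have hmem : (x, u) ∈ a ×ˢ b := ⟨hball hx, hub trivial⟩
    have := hab hmem
    simp only [Set.mem_preimage, Set.mem_Ioo, hG] at this
    rw [abs_le]
    constructor <;> linarith [this.1, this.2]
  have := abs_ciInf_sub_ciInf (hbdd x) (hbdd x₀) key
  rw [Real.dist_eq]
  calc |(⨅ u, F (x, u)) - ⨅ u, F (x₀, u)| ≤ ε / 2 := this
    _ < ε := by linarith


section DP

variable {T : X → U → Measure X} {γ : Policy X U} {c : X → U → ℝ}
variable {W : X → ℝ≥0∞} {b : ℝ≥0∞}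

/-- Expected (extended-real) cost at time `t`. -/
def ecost (c : X → U → ℝ) (T : X → U → Measure X) (γ : Policy X U) (x : X) (t : ℕ) : ℝ≥0∞ :=
  ∫⁻ z, ∫⁻ u, ENNReal.ofReal (c z.2 u) ∂(γ t z) ∂(histMeas T γ x t)

/-- Expected value of `W` at the time-`t` state. -/
def aFun (W : X → ℝ≥0∞) (T : X → U → Measure X) (γ : Policy X U) (x : X) (t : ℕ) : ℝ≥0∞ :=
  ∫⁻ z, W z.2 ∂(histMeas T γ x t)

lemma statPolicy_admissible {g : X → U} (hg : Measurable g) :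
    IsAdmissible (statPolicy g) :=
  ⟨fun _ => Measure.measurable_dirac.comp (hg.comp measurable_snd),
   fun _ _ => Measure.dirac.isProbabilityMeasure⟩

lemma measurable_inner_cost (hγ : IsAdmissible γ)
    (hcm : Measurable (Function.uncurry c)) (t : ℕ) :
    Measurable fun z : (Fin t → X × U) × X =>
      ∫⁻ u, ENNReal.ofReal (c z.2 u) ∂(γ t z) := by
  set κγ : ProbabilityTheory.Kernel ((Fin t → X × U) × X) U :=
    { toFun := γ t, measurable' := hγ.1 t } with hκγ
  haveI : ProbabilityTheory.IsMarkovKernel κγ := ⟨fun z => hγ.2 t z⟩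
  exact Measurable.lintegral_kernel_prod_right' (κ := κγ)
    (ENNReal.measurable_ofReal.comp (hcm.comp
      ((measurable_snd.comp measurable_fst).prodMk measurable_snd)))

lemma measurable_inner_W (hTm : Measurable (Function.uncurry T)) (hTp : ∀ x u, IsProbabilityMeasure (T x u))
    (hW : Measurable W) (t : ℕ) :
    Measurable fun p : (((Fin t → X × U) × X) × U) => ∫⁻ x', W x' ∂(T p.1.2 p.2) := by
  set κT : ProbabilityTheory.Kernel ((((Fin t → X × U) × X) × U)) X :=
    { toFun := fun p => T p.1.2 p.2,
      measurable' := hTm.comp ((measurable_snd.comp measurable_fst).prodMk measurable_snd) }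
    with hκT
  haveI : ProbabilityTheory.IsMarkovKernel κT := ⟨fun p => hTp _ _⟩
  exact Measurable.lintegral_kernel (κ := κT) hW

lemma measurable_inner_WInt (hTm : Measurable (Function.uncurry T))
    (hTp : ∀ x u, IsProbabilityMeasure (T x u)) (hγ : IsAdmissible γ)
    (hW : Measurable W) (t : ℕ) :
    Measurable fun z : (Fin t → X × U) × X =>
      ∫⁻ u, ∫⁻ x', W x' ∂(T z.2 u) ∂(γ t z) := by
  set κγ : ProbabilityTheory.Kernel ((Fin t → X × U) × X) U :=
    { toFun := γ t, measurable' := hγ.1 t } with hκγ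
  haveI : ProbabilityTheory.IsMarkovKernel κγ := ⟨fun z => hγ.2 t z⟩
  exact Measurable.lintegral_kernel_prod_right' (κ := κγ)
    (measurable_inner_W hTm hTp hW t)

lemma aFun_zero (W : X → ℝ≥0∞) (hW : Measurable W) (x : X) :
    aFun W T γ x 0 = W x := by
  rw [aFun]
  show ∫⁻ z, W z.2 ∂(Measure.dirac ((fun i => i.elim0 : Fin 0 → X × U), x)) = W x
  exact lintegral_dirac' _ (hW.comp measurable_snd)

lemma aFun_le (hTm : Measurable (Function.uncurry T)) (hTp : ∀ x u, IsProbabilityMeasure (T x u))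
    (hγ : IsAdmissible γ) (x : X) (t : ℕ) {C : ℝ≥0∞} (hWC : ∀ y, W y ≤ C) :
    aFun W T γ x t ≤ C := by
  haveI := isProbabilityMeasure_histMeas hTm hTp hγ x t
  calc aFun W T γ x t ≤ ∫⁻ _, C ∂(histMeas T γ x t) := lintegral_mono fun z => hWC z.2
    _ = C := by simp

lemma ecost_le (hTm : Measurable (Function.uncurry T)) (hTp : ∀ x u, IsProbabilityMeasure (T x u))
    (hγ : IsAdmissible γ) (x : X) (t : ℕ) {B : ℝ} (hB : ∀ x u, |c x u| ≤ B) :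
    ecost c T γ x t ≤ ENNReal.ofReal B := by
  haveI := isProbabilityMeasure_histMeas hTm hTp hγ x t
  have h1 : ∀ z : (Fin t → X × U) × X,
      ∫⁻ u, ENNReal.ofReal (c z.2 u) ∂(γ t z) ≤ ENNReal.ofReal B := by
    intro z
    haveI := hγ.2 t z
    calc ∫⁻ u, ENNReal.ofReal (c z.2 u) ∂(γ t z)
        ≤ ∫⁻ _, ENNReal.ofReal B ∂(γ t z) :=
          lintegral_mono fun u => ENNReal.ofReal_le_ofReal ((le_abs_self _).trans (hB _ _))
      _ = ENNReal.ofReal B := by simp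
  calc ecost c T γ x t ≤ ∫⁻ _, ENNReal.ofReal B ∂(histMeas T γ x t) := lintegral_mono h1
    _ = ENNReal.ofReal B := by simp

/-- `costAt` is the real value of `ecost`. -/
lemma ofReal_costAt (hTm : Measurable (Function.uncurry T))
    (hTp : ∀ x u, IsProbabilityMeasure (T x u)) (hγ : IsAdmissible γ)
    (hcm : Measurable (Function.uncurry c)) (hc0 : ∀ x u, 0 ≤ c x u)
    {B : ℝ} (hB : ∀ x u, |c x u| ≤ B) (hB0 : 0 ≤ B) (x : X) (t : ℕ) :
    ENNReal.ofReal (∫ z, ∫ u, c z.2 u ∂(γ t z) ∂(histMeas T γ x t)) = ecost c T γ x t ∧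
    0 ≤ ∫ z, ∫ u, c z.2 u ∂(γ t z) ∂(histMeas T γ x t) ∧
    ∫ z, ∫ u, c z.2 u ∂(γ t z) ∂(histMeas T γ x t) ≤ B := by
  haveI := isProbabilityMeasure_histMeas hTm hTp hγ x t
  have hstep1 : ∀ z : (Fin t → X × U) × X, ∫ u, c z.2 u ∂(γ t z)
      = (∫⁻ u, ENNReal.ofReal (c z.2 u) ∂(γ t z)).toReal := by
    intro z
    have hm : Measurable fun u : U => c z.2 u :=
      hcm.comp (measurable_const.prodMk measurable_id)
    rw [integral_eq_lintegral_of_nonneg_ae (Filter.Eventually.of_forall fun u => hc0 _ _)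
      hm.aestronglyMeasurable]
  have hfin : ∀ z : (Fin t → X × U) × X,
      ∫⁻ u, ENNReal.ofReal (c z.2 u) ∂(γ t z) ≤ ENNReal.ofReal B := by
    intro z
    haveI := hγ.2 t z
    calc ∫⁻ u, ENNReal.ofReal (c z.2 u) ∂(γ t z)
        ≤ ∫⁻ _, ENNReal.ofReal B ∂(γ t z) :=
          lintegral_mono fun u => ENNReal.ofReal_le_ofReal ((le_abs_self _).trans (hB _ _))
      _ = ENNReal.ofReal B := by simp
  have hmeas := measurable_inner_cost hγ hcm (t := t)
  have hstep2 : ∫ z, ∫ u, c z.2 u ∂(γ t z) ∂(histMeas T γ x t)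
      = (ecost c T γ x t).toReal := by
    simp_rw [hstep1]
    rw [ecost, integral_toReal hmeas.aemeasurable]
    exact Filter.Eventually.of_forall fun z => lt_of_le_of_lt (hfin z)
      ENNReal.ofReal_lt_top
  have hne : ecost c T γ x t ≠ ⊤ :=
    ((ecost_le hTm hTp hγ x t hB).trans_lt ENNReal.ofReal_lt_top).ne
  refine ⟨?_, ?_, ?_⟩
  · rw [hstep2, ENNReal.ofReal_toReal hne]
  · rw [hstep2]; exact ENNReal.toReal_nonneg
  · rw [hstep2]
    exact ENNReal.toReal_le_of_le_ofReal hB0 (ecost_le hTm hTp hγ x t hB)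


lemma aFun_succ (hTm : Measurable (Function.uncurry T))
    (hTp : ∀ x u, IsProbabilityMeasure (T x u)) (hγ : IsAdmissible γ)
    (hW : Measurable W) (x : X) (t : ℕ) :
    aFun W T γ x (t+1)
      = ∫⁻ z, ∫⁻ u, ∫⁻ x', W x' ∂(T z.2 u) ∂(γ t z) ∂(histMeas T γ x t) := by
  rw [aFun]
  exact lintegral_histMeas_succ hTm hTp hγ x t (hW.comp measurable_snd)

lemma dp_stepA (hTm : Measurable (Function.uncurry T))
    (hTp : ∀ x u, IsProbabilityMeasure (T x u)) (hγ : IsAdmissible γ)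
    (hcm : Measurable (Function.uncurry c)) (hW : Measurable W)
    (hpoint : ∀ y u, W y ≤ ENNReal.ofReal (c y u) + b * ∫⁻ x', W x' ∂(T y u))
    (x : X) (t : ℕ) :
    aFun W T γ x t ≤ ecost c T γ x t + b * aFun W T γ x (t+1) := by
  rw [aFun_succ hTm hTp hγ hW x t]
  have key : ∀ z : (Fin t → X × U) × X,
      W z.2 ≤ (∫⁻ u, ENNReal.ofReal (c z.2 u) ∂(γ t z))
        + b * ∫⁻ u, ∫⁻ x', W x' ∂(T z.2 u) ∂(γ t z) := by
    intro z
    haveI := hγ.2 t z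
    have hmc : Measurable fun u : U => ENNReal.ofReal (c z.2 u) :=
      ENNReal.measurable_ofReal.comp (hcm.comp (measurable_const.prodMk measurable_id))
    have hmw : Measurable fun u : U => ∫⁻ x', W x' ∂(T z.2 u) :=
      (measurable_inner_W hTm hTp hW t).comp (measurable_const.prodMk measurable_id)
    calc W z.2 = ∫⁻ _, W z.2 ∂(γ t z) := by simp
      _ ≤ ∫⁻ u, (ENNReal.ofReal (c z.2 u) + b * ∫⁻ x', W x' ∂(T z.2 u)) ∂(γ t z) :=
          lintegral_mono fun u => hpoint z.2 u
      _ = (∫⁻ u, ENNReal.ofReal (c z.2 u) ∂(γ t z))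
            + ∫⁻ u, b * ∫⁻ x', W x' ∂(T z.2 u) ∂(γ t z) := lintegral_add_left hmc _
      _ = (∫⁻ u, ENNReal.ofReal (c z.2 u) ∂(γ t z))
            + b * ∫⁻ u, ∫⁻ x', W x' ∂(T z.2 u) ∂(γ t z) := by rw [lintegral_const_mul b hmw]
  calc aFun W T γ x t
      ≤ ∫⁻ z, ((∫⁻ u, ENNReal.ofReal (c z.2 u) ∂(γ t z))
          + b * ∫⁻ u, ∫⁻ x', W x' ∂(T z.2 u) ∂(γ t z)) ∂(histMeas T γ x t) :=
        lintegral_mono fun z => key z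
    _ = ecost c T γ x t
          + ∫⁻ z, b * ∫⁻ u, ∫⁻ x', W x' ∂(T z.2 u) ∂(γ t z) ∂(histMeas T γ x t) :=
        lintegral_add_left (measurable_inner_cost hγ hcm t) _
    _ = ecost c T γ x t
          + b * ∫⁻ z, ∫⁻ u, ∫⁻ x', W x' ∂(T z.2 u) ∂(γ t z) ∂(histMeas T γ x t) := by
        rw [lintegral_const_mul b (measurable_inner_WInt hTm hTp hγ hW t)]

lemma dp_chainA (hTm : Measurable (Function.uncurry T))
    (hTp : ∀ x u, IsProbabilityMeasure (T x u)) (hγ : IsAdmissible γ)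
    (hcm : Measurable (Function.uncurry c)) (hW : Measurable W)
    (hpoint : ∀ y u, W y ≤ ENNReal.ofReal (c y u) + b * ∫⁻ x', W x' ∂(T y u))
    (x : X) : ∀ n : ℕ,
    aFun W T γ x 0 ≤ (∑ t ∈ Finset.range n, b^t * ecost c T γ x t) + b^n * aFun W T γ x n := by
  intro n
  induction n with
  | zero => simp
  | succ n ih =>
    refine ih.trans ?_
    rw [Finset.sum_range_succ]
    have h1 : b^n * aFun W T γ x n
        ≤ b^n * ecost c T γ x n + b^(n+1) * aFun W T γ x (n+1) := by
      calc b^n * aFun W T γ x n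
          ≤ b^n * (ecost c T γ x n + b * aFun W T γ x (n+1)) :=
            mul_le_mul_right (dp_stepA hTm hTp hγ hcm hW hpoint x n) _
        _ = b^n * ecost c T γ x n + b^(n+1) * aFun W T γ x (n+1) := by
            rw [mul_add, pow_succ]
            ring
    calc (∑ t ∈ Finset.range n, b^t * ecost c T γ x t) + b^n * aFun W T γ x n
        ≤ (∑ t ∈ Finset.range n, b^t * ecost c T γ x t)
          + (b^n * ecost c T γ x n + b^(n+1) * aFun W T γ x (n+1)) := add_le_add_right h1 _
      _ = ((∑ t ∈ Finset.range n, b^t * ecost c T γ x t) + b^n * ecost c T γ x n)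
          + b^(n+1) * aFun W T γ x (n+1) := by ring

lemma dp_concludeA (hTm : Measurable (Function.uncurry T))
    (hTp : ∀ x u, IsProbabilityMeasure (T x u)) (hγ : IsAdmissible γ)
    (hcm : Measurable (Function.uncurry c)) (hW : Measurable W) (hb : b < 1)
    {C : ℝ≥0∞} (hC : C ≠ ⊤) (hWC : ∀ y, W y ≤ C)
    (hpoint : ∀ y u, W y ≤ ENNReal.ofReal (c y u) + b * ∫⁻ x', W x' ∂(T y u))
    (x : X) : W x ≤ ∑' t, b^t * ecost c T γ x t := by
  have h1 : ∀ n : ℕ, W x ≤ (∑' t, b^t * ecost c T γ x t) + b^n * C := by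
    intro n
    have h2 := dp_chainA hTm hTp hγ hcm hW hpoint x n
    rw [aFun_zero W hW x] at h2
    refine h2.trans (add_le_add ?_ (mul_le_mul_right (aFun_le hTm hTp hγ x n hWC) _))
    exact ENNReal.sum_le_tsum _
  have h2 : Tendsto (fun n : ℕ => (∑' t, b^t * ecost c T γ x t) + b^n * C) atTop
      (𝓝 ((∑' t, b^t * ecost c T γ x t) + 0)) := by
    refine Tendsto.const_add _ ?_
    have h3 := ENNReal.tendsto_pow_atTop_nhds_zero_of_lt_one hb
    have := ENNReal.Tendsto.mul_const h3 (Or.inr hC)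
    simpa using this
  have := ge_of_tendsto' h2 h1
  simpa using this

lemma dp_stepB {g : X → U} (hTm : Measurable (Function.uncurry T))
    (hTp : ∀ x u, IsProbabilityMeasure (T x u)) (hg : Measurable g)
    (hcm : Measurable (Function.uncurry c)) (hW : Measurable W) {e : ℝ≥0∞}
    (hpoint : ∀ y, ENNReal.ofReal (c y (g y)) + b * ∫⁻ x', W x' ∂(T y (g y)) ≤ W y + e)
    (x : X) (t : ℕ) :
    ecost c T (statPolicy g) x t + b * aFun W T (statPolicy g) x (t+1)
      ≤ aFun W T (statPolicy g) x t + e := by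
  have hγ : IsAdmissible (statPolicy g) := statPolicy_admissible hg
  haveI := isProbabilityMeasure_histMeas hTm hTp hγ x t
  have hmc : Measurable fun z : (Fin t → X × U) × X => ENNReal.ofReal (c z.2 (g z.2)) :=
    ENNReal.measurable_ofReal.comp (hcm.comp (measurable_snd.prodMk (hg.comp measurable_snd)))
  have hmw : Measurable fun z : (Fin t → X × U) × X => ∫⁻ x', W x' ∂(T z.2 (g z.2)) :=
    (measurable_inner_W hTm hTp hW t).comp (measurable_id.prodMk (hg.comp measurable_snd))
  have he1 : ecost c T (statPolicy g) x t
      = ∫⁻ z, ENNReal.ofReal (c z.2 (g z.2)) ∂(histMeas T (statPolicy g) x t) := by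
    rw [ecost]
    congr 1
    funext z
    have hm : Measurable fun u : U => ENNReal.ofReal (c z.2 u) :=
      ENNReal.measurable_ofReal.comp (hcm.comp (measurable_const.prodMk measurable_id))
    exact lintegral_dirac' _ hm
  have he2 : aFun W T (statPolicy g) x (t+1)
      = ∫⁻ z, ∫⁻ x', W x' ∂(T z.2 (g z.2)) ∂(histMeas T (statPolicy g) x t) := by
    rw [aFun_succ hTm hTp hγ hW x t]
    congr 1
    funext z
    have hm : Measurable fun u : U => ∫⁻ x', W x' ∂(T z.2 u) :=
      (measurable_inner_W hTm hTp hW t).comp (measurable_const.prodMk measurable_id)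
    exact lintegral_dirac' _ hm
  rw [he1, he2, ← lintegral_const_mul b hmw, ← lintegral_add_left hmc]
  calc ∫⁻ z, (ENNReal.ofReal (c z.2 (g z.2)) + b * ∫⁻ x', W x' ∂(T z.2 (g z.2)))
        ∂(histMeas T (statPolicy g) x t)
      ≤ ∫⁻ z, (W z.2 + e) ∂(histMeas T (statPolicy g) x t) :=
        lintegral_mono fun z => hpoint z.2
    _ = aFun W T (statPolicy g) x t + e := by
        rw [lintegral_add_right _ measurable_const]
        simp [aFun]

lemma dp_chainB' {g : X → U} (hTm : Measurable (Function.uncurry T))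
    (hTp : ∀ x u, IsProbabilityMeasure (T x u)) (hg : Measurable g)
    (hcm : Measurable (Function.uncurry c)) (hW : Measurable W) {e : ℝ≥0∞}
    (hpoint : ∀ y, ENNReal.ofReal (c y (g y)) + b * ∫⁻ x', W x' ∂(T y (g y)) ≤ W y + e)
    (x : X) : ∀ n : ℕ,
    (∑ t ∈ Finset.range n, b^t * ecost c T (statPolicy g) x t)
        + b^n * aFun W T (statPolicy g) x n
      ≤ aFun W T (statPolicy g) x 0 + (∑ t ∈ Finset.range n, b^t) * e := by
  intro n
  induction n with
  | zero => simp
  | succ n ih =>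
    have hstep := dp_stepB hTm hTp hg hcm hW hpoint x n
    have h1 : b^n * (ecost c T (statPolicy g) x n + b * aFun W T (statPolicy g) x (n+1))
        ≤ b^n * (aFun W T (statPolicy g) x n + e) := mul_le_mul_right hstep _
    rw [Finset.sum_range_succ, Finset.sum_range_succ]
    calc (∑ t ∈ Finset.range n, b^t * ecost c T (statPolicy g) x t)
          + b^n * ecost c T (statPolicy g) x n + b^(n+1) * aFun W T (statPolicy g) x (n+1)
        = (∑ t ∈ Finset.range n, b^t * ecost c T (statPolicy g) x t)
          + b^n * (ecost c T (statPolicy g) x n + b * aFun W T (statPolicy g) x (n+1)) := by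
          rw [mul_add, pow_succ]; ring
      _ ≤ (∑ t ∈ Finset.range n, b^t * ecost c T (statPolicy g) x t)
          + (b^n * aFun W T (statPolicy g) x n + b^n * e) := by
          rw [← mul_add]; exact add_le_add_right h1 _
      _ = ((∑ t ∈ Finset.range n, b^t * ecost c T (statPolicy g) x t)
          + b^n * aFun W T (statPolicy g) x n) + b^n * e := by ring
      _ ≤ (aFun W T (statPolicy g) x 0 + (∑ t ∈ Finset.range n, b^t) * e) + b^n * e :=
          add_le_add_left ih _
      _ = aFun W T (statPolicy g) x 0 + ((∑ t ∈ Finset.range n, b^t) + b^n) * e := by ring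

lemma dp_concludeB {g : X → U} (hTm : Measurable (Function.uncurry T))
    (hTp : ∀ x u, IsProbabilityMeasure (T x u)) (hg : Measurable g)
    (hcm : Measurable (Function.uncurry c)) (hW : Measurable W) {e : ℝ≥0∞}
    (hpoint : ∀ y, ENNReal.ofReal (c y (g y)) + b * ∫⁻ x', W x' ∂(T y (g y)) ≤ W y + e)
    (x : X) :
    ∑' t, b^t * ecost c T (statPolicy g) x t ≤ W x + (1 - b)⁻¹ * e := by
  have key : ∀ n : ℕ, ∑ t ∈ Finset.range n, b^t * ecost c T (statPolicy g) x t
      ≤ W x + (1 - b)⁻¹ * e := by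
    intro n
    have h1 := dp_chainB' hTm hTp hg hcm hW hpoint x n
    rw [aFun_zero W hW x] at h1
    refine le_trans (le_trans (le_add_right le_rfl) h1) (add_le_add_right ?_ _)
    refine mul_le_mul_left ?_ e
    rw [← ENNReal.tsum_geometric]
    exact ENNReal.sum_le_tsum _
  exact ENNReal.tsum_le_of_sum_range_le key

lemma ofReal_costAt' (hTm : Measurable (Function.uncurry T))
    (hTp : ∀ x u, IsProbabilityMeasure (T x u)) (hγ : IsAdmissible γ)
    (hcm : Measurable (Function.uncurry c)) (hc0 : ∀ x u, 0 ≤ c x u)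
    {B : ℝ} (hB : ∀ x u, |c x u| ≤ B) (hB0 : 0 ≤ B) (x : X) (t : ℕ) :
    ENNReal.ofReal (costAt c T γ x t) = ecost c T γ x t ∧
    0 ≤ costAt c T γ x t ∧ costAt c T γ x t ≤ B :=
  ofReal_costAt hTm hTp hγ hcm hc0 hB hB0 x t

lemma ofReal_Jdisc (hTm : Measurable (Function.uncurry T))
    (hTp : ∀ x u, IsProbabilityMeasure (T x u)) (hγ : IsAdmissible γ)
    (hcm : Measurable (Function.uncurry c)) (hc0 : ∀ x u, 0 ≤ c x u)
    {B : ℝ} (hB : ∀ x u, |c x u| ≤ B) (hB0 : 0 ≤ B)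
    {β : ℝ} (hβ0 : 0 ≤ β) (hβ1 : β < 1) (x : X) :
    ENNReal.ofReal (Jdisc β c T γ x)
      = ∑' t, (ENNReal.ofReal β)^t * ecost c T γ x t ∧ 0 ≤ Jdisc β c T γ x := by
  have hca := fun t => ofReal_costAt' hTm hTp hγ hcm hc0 hB hB0 x t
  have h0 : ∀ t, 0 ≤ β^t * costAt c T γ x t :=
    fun t => mul_nonneg (pow_nonneg hβ0 _) (hca t).2.1
  have hsummable : Summable fun t => β^t * costAt c T γ x t := by
    refine Summable.of_nonneg_of_le h0 (fun t => ?_)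
      ((summable_geometric_of_lt_one hβ0 hβ1).mul_right B)
    exact mul_le_mul_of_nonneg_left (hca t).2.2 (pow_nonneg hβ0 t)
  constructor
  · rw [Jdisc, ENNReal.ofReal_tsum_of_nonneg h0 hsummable]
    congr 1
    funext t
    rw [ENNReal.ofReal_mul (pow_nonneg hβ0 t), ENNReal.ofReal_pow hβ0, (hca t).1]
  · exact tsum_nonneg h0

end DP

end MDPRobust

namespace MDPRobust

open scoped BoundedContinuousFunction in
/-- Existence, continuity, nonnegativity and the Bellman equation for the optimal
discounted value function, which is obtained as the fixed point of the Bellman operator. -/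
theorem exists_value {X U : Type*} [MeasurableSpace X] [MetricSpace X] [BorelSpace X]
    [MeasurableSpace U] [MetricSpace U] [BorelSpace U]
    [SecondCountableTopology U] [CompactSpace U] [Nonempty U]
    (T : X → U → Measure X) (c : X → U → ℝ) (hT : AssumptionB T c)
    (β : ℝ) (hβ0 : 0 < β) (hβ1 : β < 1) :
    ∃ V : X →ᵇ ℝ, (∀ x, 0 ≤ V x) ∧
      (∀ x, V x = ⨅ u, (c x u + β * ∫ y, V y ∂(T x u))) ∧
      (∀ x, JdiscOpt β c T x = V x) := by
  classical
  obtain ⟨hc0, ⟨B, hB⟩, hccont, hTp, hTm, hTw⟩ := hT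
  have hcm : Measurable (Function.uncurry c) := hccont.measurable
  rcases isEmpty_or_nonempty X with hX | hX
  · exact ⟨0, fun x => (hX.false x).elim, fun x => (hX.false x).elim, fun x => (hX.false x).elim⟩
  have hB0 : 0 ≤ B :=
    (abs_nonneg _).trans (hB (Classical.arbitrary X) (Classical.arbitrary U))
  -- The function appearing in the Bellman operator
  set Ff : (X →ᵇ ℝ) → X × U → ℝ :=
    fun v p => c p.1 p.2 + β * ∫ y, v y ∂(T p.1 p.2) with hFf
  have hFfc : ∀ v : X →ᵇ ℝ, Continuous (Ff v) := by
    intro v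
    have h1 : Continuous fun p : X × U => c p.1 p.2 := hccont
    have h2 : Continuous fun p : X × U => ∫ y, v y ∂(T p.1 p.2) :=
      hTw v v.continuous ⟨‖v‖, fun y => by
        simpa [Real.norm_eq_abs] using v.norm_coe_le_norm y⟩
    exact h1.add (continuous_const.mul h2)
  have hInt : ∀ (v : X →ᵇ ℝ) (x : X) (u : U), |∫ y, v y ∂(T x u)| ≤ ‖v‖ := by
    intro v x u
    haveI := hTp x u
    rw [← Real.norm_eq_abs]
    calc ‖∫ y, v y ∂(T x u)‖ ≤ ‖v‖ * ((T x u) Set.univ).toReal :=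
          norm_integral_le_of_norm_le_const
            (Filter.Eventually.of_forall fun y => v.norm_coe_le_norm y)
      _ = ‖v‖ := by simp
  have hFb : ∀ (v : X →ᵇ ℝ) p, |Ff v p| ≤ B + β * ‖v‖ := by
    intro v p
    have h1 := hB p.1 p.2
    have h2 := hInt v p.1 p.2
    rw [abs_le] at h1 h2 ⊢
    have h3 := mul_le_mul_of_nonneg_left h2.1 hβ0.le
    have h4 := mul_le_mul_of_nonneg_left h2.2 hβ0.le
    simp only [hFf]
    constructor <;> nlinarith [h3, h4]
  have hbddF : ∀ (v : X →ᵇ ℝ) (x : X), BddBelow (Set.range fun u => Ff v (x, u)) := by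
    intro v x
    refine ⟨-(B + β * ‖v‖), ?_⟩
    rintro r ⟨u, rfl⟩
    have := hFb v (x, u)
    rw [abs_le] at this
    linarith [this.1]
  -- the Bellman operator
  set op : (X →ᵇ ℝ) → (X →ᵇ ℝ) := fun v =>
    BoundedContinuousFunction.ofNormedAddCommGroup (fun x => ⨅ u, Ff v (x, u))
      (continuous_iInf_of_compact (hFfc v)) (B + β * ‖v‖)
      (by
        intro x
        rw [Real.norm_eq_abs, abs_le]
        constructor
        · refine le_ciInf fun u => ?_
          have := hFb v (x, u); rw [abs_le] at this; linarith [this.1]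
        · refine (ciInf_le (hbddF v x) (Classical.arbitrary U)).trans ?_
          have := hFb v (x, Classical.arbitrary U); rw [abs_le] at this; exact this.2)
    with hop
  have hopx : ∀ (v : X →ᵇ ℝ) (x : X), op v x = ⨅ u, Ff v (x, u) := fun v x => rfl
  -- contraction
  set K : ℝ≥0 := ⟨β, hβ0.le⟩ with hKdef
  have hlip : LipschitzWith K op := by
    apply LipschitzWith.of_dist_le_mul
    intro v w
    have h0 : (0 : ℝ) ≤ (K : ℝ) * dist v w := mul_nonneg K.2 dist_nonneg
    rw [BoundedContinuousFunction.dist_le h0]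
    intro x
    rw [Real.dist_eq, hopx, hopx]
    refine abs_ciInf_sub_ciInf (hbddF v x) (hbddF w x) ?_
    intro u
    haveI := hTp x u
    have hsub : ∫ y, v y ∂(T x u) - ∫ y, w y ∂(T x u) = ∫ y, (v y - w y) ∂(T x u) :=
      (integral_sub (v.integrable _) (w.integrable _)).symm
    have habs : |∫ y, (v y - w y) ∂(T x u)| ≤ dist v w := by
      rw [← Real.norm_eq_abs]
      calc ‖∫ y, (v y - w y) ∂(T x u)‖ ≤ dist v w * ((T x u) Set.univ).toReal := by
            refine norm_integral_le_of_norm_le_const (Filter.Eventually.of_forall fun y => ?_)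
            rw [Real.norm_eq_abs, ← Real.dist_eq]
            exact BoundedContinuousFunction.dist_coe_le_dist y
        _ = dist v w := by simp
    have heq : Ff v (x, u) - Ff w (x, u)
        = β * (∫ y, v y ∂(T x u) - ∫ y, w y ∂(T x u)) := by
      simp only [hFf]; ring
    rw [heq, hsub, abs_mul, abs_of_pos hβ0]
    exact mul_le_mul_of_nonneg_left habs hβ0.le
  have hcontr : ContractingWith K op := by
    refine ⟨?_, hlip⟩
    have : (K : ℝ) < 1 := hβ1
    exact_mod_cast this
  set V : X →ᵇ ℝ := ContractingWith.fixedPoint op hcontr with hVdef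
  have hfix : op V = V := hcontr.fixedPoint_isFixedPt
  have hbell : ∀ x, V x = ⨅ u, Ff V (x, u) := by
    intro x
    have := DFunLike.congr_fun hfix x
    rw [← this, hopx]
  -- nonnegativity of V
  have hbV : BddBelow (Set.range fun y : X => V y) := by
    refine ⟨-‖V‖, ?_⟩
    rintro r ⟨y, rfl⟩
    have := V.norm_coe_le_norm y
    rw [Real.norm_eq_abs, abs_le] at this
    linarith [this.1]
  have hV0 : ∀ x, 0 ≤ V x := by
    intro x
    set m := ⨅ y : X, V y with hm
    have hkey : ∀ y : X, β * m ≤ V y := by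
      intro y
      rw [hbell y]
      refine le_ciInf fun u => ?_
      haveI := hTp y u
      have hint : m ≤ ∫ y', V y' ∂(T y u) := by
        have h1 : ∫ _ : X, m ∂(T y u) = m := by simp
        rw [← h1]
        exact integral_mono (integrable_const m) (V.integrable _) fun y' => ciInf_le hbV y'
      have := hc0 y u
      have h2 : β * m ≤ β * ∫ y', V y' ∂(T y u) := mul_le_mul_of_nonneg_left hint hβ0.le
      simp only [hFf]
      linarith
    have h2 : β * m ≤ m := le_ciInf hkey
    have h3 : 0 ≤ m := by nlinarith
    exact h3.trans (ciInf_le hbV x)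
  have hVle : ∀ x u, V x ≤ c x u + β * ∫ y, V y ∂(T x u) := by
    intro x u
    rw [hbell x]
    exact ciInf_le (hbddF V x) u
  -- ENNReal setup
  set bE := ENNReal.ofReal β with hbEdef
  have hbE1 : bE < 1 := by
    rw [hbEdef, ← ENNReal.ofReal_one]
    exact (ENNReal.ofReal_lt_ofReal_iff one_pos).2 hβ1
  set W : X → ℝ≥0∞ := fun y => ENNReal.ofReal (V y) with hWdef
  have hWm : Measurable W := ENNReal.measurable_ofReal.comp V.continuous.measurable
  have hWC : ∀ y, W y ≤ ENNReal.ofReal ‖V‖ := by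
    intro y
    refine ENNReal.ofReal_le_ofReal ?_
    have := V.norm_coe_le_norm y
    rw [Real.norm_eq_abs] at this
    exact (le_abs_self _).trans this
  have hlint : ∀ (x : X) (u : U),
      ∫⁻ x', W x' ∂(T x u) = ENNReal.ofReal (∫ y, V y ∂(T x u)) := by
    intro x u
    haveI := hTp x u
    exact (ofReal_integral_eq_lintegral_ofReal (V.integrable _)
      (Filter.Eventually.of_forall hV0)).symm
  have hpointA : ∀ (y : X) (u : U),
      W y ≤ ENNReal.ofReal (c y u) + bE * ∫⁻ x', W x' ∂(T y u) := by
    intro y u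
    rw [hlint y u, hbEdef, ← ENNReal.ofReal_mul hβ0.le,
      ← ENNReal.ofReal_add (hc0 y u) (mul_nonneg hβ0.le (integral_nonneg hV0))]
    exact ENNReal.ofReal_le_ofReal (hVle y u)
  -- lower bound: V ≤ J for every admissible policy
  have hlower : ∀ γ : Policy X U, IsAdmissible γ → ∀ x, V x ≤ Jdisc β c T γ x := by
    intro γ hγ x
    have hA := dp_concludeA hTm hTp hγ hcm hWm hbE1 ENNReal.ofReal_ne_top hWC hpointA x
    have hsum := ofReal_Jdisc hTm hTp hγ hcm hc0 hB hB0 hβ0.le hβ1 x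
    rw [← hsum.1] at hA
    exact (ENNReal.ofReal_le_ofReal_iff hsum.2).1 hA
  -- approximate measurable selection
  have hsel : ∀ δ : ℝ, 0 < δ → ∃ g : X → U, Measurable g ∧
      ∀ y, c y (g y) + β * ∫ y', V y' ∂(T y (g y)) ≤ V y + δ := by
    intro δ hδ
    set useq : ℕ → U := TopologicalSpace.denseSeq U with huseq
    have hu : DenseRange useq := TopologicalSpace.denseRange_denseSeq U
    have hex : ∀ y : X, ∃ n, Ff V (y, useq n) < V y + δ := by
      intro y
      have h1 : (⨅ u, Ff V (y, u)) < V y + δ := by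
        rw [← hbell y]; linarith
      obtain ⟨u₀, hu₀⟩ := exists_lt_of_ciInf_lt h1
      have hopen : IsOpen {w : U | Ff V (y, w) < V y + δ} :=
        isOpen_lt ((hFfc V).comp (Continuous.prodMk_right y)) continuous_const
      obtain ⟨n, hn⟩ := hu.exists_mem_open hopen ⟨u₀, hu₀⟩
      exact ⟨n, hn⟩
    refine ⟨fun y => useq (Nat.find (hex y)), ?_, ?_⟩
    · refine Measurable.find (f := fun n (_ : X) => useq n)
        (p := fun n y => Ff V (y, useq n) < V y + δ) (fun n => measurable_const)
        (fun n => ?_) hex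
      have hopen : IsOpen {y : X | Ff V (y, useq n) < V y + δ} := by
        refine isOpen_lt ?_ ?_
        · exact (hFfc V).comp (continuous_id.prodMk continuous_const)
        · exact (V.continuous).add continuous_const
      exact hopen.measurableSet
    · intro y
      exact (Nat.find_spec (hex y)).le
  -- upper bound: JdiscOpt ≤ V
  have hupper : ∀ x, JdiscOpt β c T x ≤ V x := by
    intro x
    refine le_of_forall_pos_le_add ?_
    intro ε hε
    set δ := ε * (1 - β) with hδdef
    have hδ0 : 0 < δ := mul_pos hε (by linarith)
    obtain ⟨g, hgm, hgopt⟩ := hsel δ hδ0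
    have hγ : IsAdmissible (statPolicy g) := statPolicy_admissible hgm
    have hpointB : ∀ y, ENNReal.ofReal (c y (g y)) + bE * ∫⁻ x', W x' ∂(T y (g y))
        ≤ W y + ENNReal.ofReal δ := by
      intro y
      rw [hlint y (g y), hbEdef, ← ENNReal.ofReal_mul hβ0.le,
        ← ENNReal.ofReal_add (hc0 y (g y)) (mul_nonneg hβ0.le (integral_nonneg hV0)),
        hWdef, ← ENNReal.ofReal_add (hV0 y) hδ0.le]
      exact ENNReal.ofReal_le_ofReal (hgopt y)
    have hBconc := dp_concludeB hTm hTp hgm hcm hWm hpointB x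
    have hsum := ofReal_Jdisc hTm hTp hγ hcm hc0 hB hB0 hβ0.le hβ1 x
    have h1b : (1 : ℝ≥0∞) - bE = ENNReal.ofReal (1 - β) := by
      rw [hbEdef, ENNReal.ofReal_sub _ hβ0.le, ENNReal.ofReal_one]
    have h2 : (1 - bE)⁻¹ * ENNReal.ofReal δ = ENNReal.ofReal ε := by
      have hne : (1:ℝ) - β ≠ 0 := by linarith
      rw [h1b, ← ENNReal.ofReal_inv_of_pos (by linarith : (0:ℝ) < 1 - β),
        ← ENNReal.ofReal_mul (inv_nonneg.2 (by linarith : (0:ℝ) ≤ 1 - β))]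
      congr 1
      rw [hδdef, mul_comm]
      exact mul_inv_cancel_right₀ hne ε
    have final : ENNReal.ofReal (Jdisc β c T (statPolicy g) x)
        ≤ ENNReal.ofReal (V x + ε) := by
      rw [hsum.1]
      refine hBconc.trans ?_
      rw [h2, ENNReal.ofReal_add (hV0 x) hε.le]
    have hJle : Jdisc β c T (statPolicy g) x ≤ V x + ε :=
      (ENNReal.ofReal_le_ofReal_iff (add_nonneg (hV0 x) hε.le)).1 final
    have hbdd : BddBelow {r | ∃ γ' : Policy X U, IsAdmissible γ' ∧ r = Jdisc β c T γ' x} := by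
      refine ⟨0, ?_⟩
      rintro r ⟨γ', hγ', rfl⟩
      exact (ofReal_Jdisc hTm hTp hγ' hcm hc0 hB hB0 hβ0.le hβ1 x).2
    exact (csInf_le hbdd ⟨statPolicy g, hγ, rfl⟩).trans hJle
  have hlower' : ∀ x, V x ≤ JdiscOpt β c T x := by
    intro x
    refine le_csInf ⟨Jdisc β c T (statPolicy fun _ => Classical.arbitrary U) x,
      statPolicy fun _ => Classical.arbitrary U,
      statPolicy_admissible measurable_const, rfl⟩ ?_
    rintro r ⟨γ', hγ', rfl⟩
    exact hlower γ' hγ' x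
  exact ⟨V, hV0, hbell, fun x => le_antisymm (hupper x) (hlower' x)⟩


/-- Theorem `upperbound1proof`: continuity of optimal discounted value
functions in the model.  Sup-norm bounds are expressed pointwise, and the quantities
`‖c−ĉ‖_∞`, `d_{J*_β(c,T)}(T,S)`, `d_{W1}(T,S)` are represented by arbitrary upper
bounds `Dc`, `DT`, `DW` (for `d_{W1}` through its Kantorovich–Rubinstein dual form). -/
theorem discounted_value_continuity
    {X U : Type*} [MeasurableSpace X] [MetricSpace X] [BorelSpace X]
    [CompleteSpace X] [SecondCountableTopology X]
    [MeasurableSpace U] [MetricSpace U] [BorelSpace U]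
    [CompleteSpace U] [SecondCountableTopology U] [CompactSpace U] [Nonempty U]
    (T S : X → U → Measure X) (c chat : X → U → ℝ)
    (hT : AssumptionB T c) (hS : AssumptionB S chat)
    (β : ℝ) (hβ0 : 0 < β) (hβ1 : β < 1) :
    (∀ Dc DT : ℝ,
      (∀ x u, |c x u - chat x u| ≤ Dc) →
      (∀ x u, dFun (JdiscOpt β c T) (T x u) (S x u) ≤ DT) →
      ∀ x, |JdiscOpt β c T x - JdiscOpt β chat S x| ≤
        Dc / (1 - β) + β / (1 - β) * DT)
    ∧
    (∀ K : ℝ≥0, LipschitzWith K (JdiscOpt β c T) →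
      ∀ Dc DW : ℝ,
      (∀ x u, |c x u - chat x u| ≤ Dc) →
      (∀ f : X → ℝ, LipschitzWith 1 f → ∀ x u, dFun f (T x u) (S x u) ≤ DW) →
      ∀ x, |JdiscOpt β c T x - JdiscOpt β chat S x| ≤
        Dc / (1 - β) + β / (1 - β) * (K * DW)) := by
  obtain ⟨VT, hVT0, hVTbell, hVTopt⟩ := exists_value T c hT β hβ0 hβ1
  obtain ⟨VS, hVS0, hVSbell, hVSopt⟩ := exists_value S chat hS β hβ0 hβ1
  obtain ⟨hc0, ⟨B, hB⟩, hccont, hTp, hTm, hTw⟩ := hT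
  obtain ⟨hchat0, ⟨Bh, hBh⟩, hchatcont, hSp, hSm, hSw⟩ := hS
  have hmain : ∀ Dc DT : ℝ,
      (∀ x u, |c x u - chat x u| ≤ Dc) →
      (∀ x u, dFun (JdiscOpt β c T) (T x u) (S x u) ≤ DT) →
      ∀ x, |JdiscOpt β c T x - JdiscOpt β chat S x| ≤
        Dc / (1 - β) + β / (1 - β) * DT := by
    intro Dc DT hDc hDT x
    haveI : Nonempty X := ⟨x⟩
    have hβ1' : (0:ℝ) < 1 - β := by linarith
    have hDc0 : 0 ≤ Dc := (abs_nonneg _).trans (hDc x (Classical.arbitrary U))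
    have hDT0 : 0 ≤ DT := (abs_nonneg _).trans (hDT x (Classical.arbitrary U))
    set Δ := ‖VT - VS‖ with hΔdef
    have hΔ0 : 0 ≤ Δ := norm_nonneg _
    have hbddT : ∀ x' : X, BddBelow (Set.range fun u => c x' u + β * ∫ y, VT y ∂(T x' u)) := by
      intro x'
      refine ⟨0, ?_⟩
      rintro r ⟨u, rfl⟩
      exact add_nonneg (hc0 x' u) (mul_nonneg hβ0.le (integral_nonneg hVT0))
    have hbddS : ∀ x' : X, BddBelow (Set.range fun u => chat x' u + β * ∫ y, VS y ∂(S x' u)) := by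
      intro x'
      refine ⟨0, ?_⟩
      rintro r ⟨u, rfl⟩
      exact add_nonneg (hchat0 x' u) (mul_nonneg hβ0.le (integral_nonneg hVS0))
    have hfunT : JdiscOpt β c T = fun y => VT y := funext hVTopt
    have hptwise : ∀ x' : X, |VT x' - VS x'| ≤ Dc + β * DT + β * Δ := by
      intro x'
      rw [hVTbell x', hVSbell x']
      refine abs_ciInf_sub_ciInf (hbddT x') (hbddS x') ?_
      intro u
      have h1 : |c x' u - chat x' u| ≤ Dc := hDc x' u
      have h2 : |∫ y, VT y ∂(T x' u) - ∫ y, VT y ∂(S x' u)| ≤ DT := by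
        have h := hDT x' u
        rw [dFun, hfunT] at h
        exact h
      have h3 : |∫ y, VT y ∂(S x' u) - ∫ y, VS y ∂(S x' u)| ≤ Δ := by
        haveI := hSp x' u
        rw [← integral_sub (VT.integrable _) (VS.integrable _), ← Real.norm_eq_abs]
        calc ‖∫ y, (VT y - VS y) ∂(S x' u)‖
            ≤ ‖VT - VS‖ * ((S x' u) Set.univ).toReal := by
              refine norm_integral_le_of_norm_le_const (Filter.Eventually.of_forall fun y => ?_)
              have heq : VT y - VS y = (VT - VS) y := by simp
              rw [heq]
              exact (VT - VS).norm_coe_le_norm y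
          _ = Δ := by simp [hΔdef]
      have hsplit : (c x' u + β * ∫ y, VT y ∂(T x' u)) - (chat x' u + β * ∫ y, VS y ∂(S x' u))
          = (c x' u - chat x' u)
            + (β * ((∫ y, VT y ∂(T x' u)) - ∫ y, VT y ∂(S x' u))
              + β * ((∫ y, VT y ∂(S x' u)) - ∫ y, VS y ∂(S x' u))) := by ring
      rw [hsplit]
      calc |(c x' u - chat x' u)
            + (β * ((∫ y, VT y ∂(T x' u)) - ∫ y, VT y ∂(S x' u))
              + β * ((∫ y, VT y ∂(S x' u)) - ∫ y, VS y ∂(S x' u)))|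
          ≤ |c x' u - chat x' u|
            + (|β * ((∫ y, VT y ∂(T x' u)) - ∫ y, VT y ∂(S x' u))|
              + |β * ((∫ y, VT y ∂(S x' u)) - ∫ y, VS y ∂(S x' u))|) :=
            (abs_add_le _ _).trans (add_le_add_right (abs_add_le _ _) _)
        _ ≤ Dc + (β * DT + β * Δ) := by
            refine add_le_add h1 (add_le_add ?_ ?_) <;>
              rw [abs_mul, abs_of_pos hβ0]
            · exact mul_le_mul_of_nonneg_left h2 hβ0.le
            · exact mul_le_mul_of_nonneg_left h3 hβ0.le
        _ = Dc + β * DT + β * Δ := by ring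
    have hnorm : Δ ≤ Dc + β * DT + β * Δ := by
      have h0 : (0:ℝ) ≤ Dc + β * DT + β * Δ := by positivity
      rw [hΔdef, BoundedContinuousFunction.norm_le h0]
      intro x'
      have heq : (VT - VS) x' = VT x' - VS x' := by simp
      rw [heq, Real.norm_eq_abs]
      exact hptwise x'
    have hΔle : Δ ≤ (Dc + β * DT) / (1 - β) := by
      rw [le_div_iff₀ hβ1']
      nlinarith
    calc |JdiscOpt β c T x - JdiscOpt β chat S x| = |VT x - VS x| := by
          rw [hVTopt x, hVSopt x]
      _ ≤ Δ := by
          have heq : VT x - VS x = (VT - VS) x := by simp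
          rw [heq, ← Real.norm_eq_abs]
          exact (VT - VS).norm_coe_le_norm x
      _ ≤ (Dc + β * DT) / (1 - β) := hΔle
      _ = Dc / (1 - β) + β / (1 - β) * DT := by field_simp
  refine ⟨hmain, ?_⟩
  intro K hK Dc DW hDc hDW x
  refine hmain Dc ((K : ℝ) * DW) hDc ?_ x
  intro x' u
  have hfunT : JdiscOpt β c T = fun y => VT y := funext hVTopt
  rw [dFun, hfunT]
  haveI := hTp x' u
  haveI := hSp x' u
  rcases eq_or_ne (K : ℝ) 0 with hK0 | hK0
  · -- K = 0 : the value function is constant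
    have hconst : ∀ y, VT y = VT x' := by
      intro y
      have h := hK.dist_le_mul y x'
      rw [hfunT] at h
      rw [hK0, zero_mul] at h
      have := dist_nonneg (x := VT y) (y := VT x')
      have hdist : dist (VT y) (VT x') = 0 := le_antisymm h this
      exact dist_eq_zero.1 hdist
    have hTc : ∫ y, VT y ∂(T x' u) = VT x' := by
      rw [show (fun y => VT y) = fun _ : X => VT x' from funext hconst]
      simp
    have hSc : ∫ y, VT y ∂(S x' u) = VT x' := by
      rw [show (fun y => VT y) = fun _ : X => VT x' from funext hconst]
      simp
    rw [hTc, hSc, sub_self, abs_zero, hK0, zero_mul]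
  · have hKpos : 0 < (K : ℝ) := lt_of_le_of_ne K.2 (Ne.symm hK0)
    set f : X → ℝ := fun y => (K : ℝ)⁻¹ * VT y with hfdef
    have hf : LipschitzWith 1 f := by
      apply LipschitzWith.of_dist_le_mul
      intro a b
      rw [NNReal.coe_one, one_mul]
      have h := hK.dist_le_mul a b
      rw [hfunT] at h
      have hd : dist (f a) (f b) = (K : ℝ)⁻¹ * dist (VT a) (VT b) := by
        rw [Real.dist_eq, Real.dist_eq, hfdef]
        rw [← mul_sub, abs_mul, abs_of_pos (inv_pos.2 hKpos)]
      rw [hd]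
      calc (K : ℝ)⁻¹ * dist (VT a) (VT b) ≤ (K : ℝ)⁻¹ * ((K : ℝ) * dist a b) :=
            mul_le_mul_of_nonneg_left h (inv_nonneg.2 hKpos.le)
        _ = dist a b := by field_simp
      -- note : (1 : ℝ≥0) coerces to 1
    have hDWf := hDW f hf x' u
    rw [dFun] at hDWf
    have hTf : ∫ y, VT y ∂(T x' u) = (K : ℝ) * ∫ y, f y ∂(T x' u) := by
      rw [hfdef, integral_const_mul, ← mul_assoc, mul_inv_cancel₀ hK0, one_mul]
    have hSf : ∫ y, VT y ∂(S x' u) = (K : ℝ) * ∫ y, f y ∂(S x' u) := by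
      rw [hfdef, integral_const_mul, ← mul_assoc, mul_inv_cancel₀ hK0, one_mul]
    rw [hTf, hSf, ← mul_sub, abs_mul, abs_of_pos hKpos]
    exact mul_le_mul_of_nonneg_left hDWf hKpos.le


end MDPRobust
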